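/- (Proposition 3.) Assume π̲ = 0, t_e/2 < t_s ≤ t_e, and 0 < 2 t_r < t_k. Then the pair (π̄, 1 − t_s/t_e) is P3-feasible and Φ₃(π̄, 1 − t_s/t_e) ≤ Φ₃(p, q) for every P3-feasible pair (p, q). That is, when the deadline is between half the execution time and the execution time, the optimal persistent-request strategy bids the on-demand price p* = π̄ and runs the portion q* = 1 − t_s/t_e of the job on the on-demand instance. -/

import Mathlib

/-- Expected total cost for a persistent request (with `π̲ = 0`). -/
noncomputable def Phi3 (πhi tk te tr : ℝ) (f F : ℝ → ℝ) (p q : ℝ) : ℝ :=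
  q * te * πhi +
    ((1 - q) * te / (1 - (tr / tk) * (1 - F p))) * ((∫ x in (0:ℝ)..p, x * f x) / F p)

/-- Feasibility for problem (P3) (with `π̲ = 0`). -/
def P3Feasible (πhi tk te ts tr : ℝ) (F : ℝ → ℝ) (p q : ℝ) : Prop :=
  0 ≤ p ∧ p ≤ πhi ∧ 0 ≤ q ∧ q ≤ 1 ∧ q * te ≤ ts ∧ 0 < F p ∧
  2 * tr * (1 - F p) < tk ∧
  (1 - q) * te ≤ ts * F p * (1 - (tr / tk) * (1 - F p))

/-- Key algebraic inequality. -/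
lemma stmt_15_aux (πhi Fp D Ap Api te ts q : ℝ)
    (hπ : 0 < πhi) (hts : 0 < ts) (hq1 : q ≤ 1) (hte : 0 < te)
    (hFp : 0 < Fp) (hD : 0 < D) (hD1 : D ≤ 1) (hFp1 : Fp ≤ 1)
    (hAp : 0 ≤ Ap) (htail : Api - Ap ≤ πhi * (1 - Fp)) (hApi : Api ≤ πhi)
    (hcon : (1 - q) * te ≤ ts * Fp * D) :
    (te - ts) * πhi + ts * Api ≤ q * te * πhi + ((1 - q) * te / D) * (Ap / Fp) := by
  have hT : 0 ≤ (1 - q) * te := mul_nonneg (by linarith) hte.le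
  have hG : 0 < D * Fp := mul_pos hD hFp
  rw [div_mul_div_comm, ← sub_le_iff_le_add', le_div_iff₀ hG]
  rcases le_or_gt Ap (πhi * (Fp * D)) with h | h
  · nlinarith [mul_nonneg (sub_nonneg.2 hcon) (sub_nonneg.2 h),
      mul_nonneg (mul_nonneg hts.le hG.le)
        (by linarith : (0:ℝ) ≤ πhi * (1 - Fp) + Ap - Api),
      mul_nonneg (mul_nonneg hts.le hπ.le)
        (mul_nonneg (mul_pos hFp hD).le
          (mul_nonneg hFp.le (by linarith : (0:ℝ) ≤ 1 - D)))]
  · nlinarith [mul_nonneg hT (by linarith : (0:ℝ) ≤ Ap - πhi * (Fp * D)),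
      mul_nonneg (mul_nonneg hts.le hG.le) (by linarith : (0:ℝ) ≤ πhi - Api)]

/-- (Proposition 3.) If `π̲ = 0`, `t_e/2 < t_s ≤ t_e` and `0 < 2 t_r < t_k`, then
`(π̄, 1 − t_s/t_e)` is P3-feasible and optimal for (P3). -/
theorem stmt_15
    (πhi : ℝ) (f F : ℝ → ℝ)
    (hπhi : 0 < πhi)
    (hcont : ContinuousOn f (Set.Icc 0 πhi))
    (hnn : ∀ x ∈ Set.Icc 0 πhi, 0 ≤ f x)
    (hanti : ∀ x ∈ Set.Icc 0 πhi, ∀ y ∈ Set.Icc 0 πhi, x ≤ y → f y ≤ f x)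
    (hone : (∫ x in (0:ℝ)..πhi, f x) = 1)
    (hF : ∀ p, F p = ∫ x in (0:ℝ)..p, f x)
    (tk te ts tr : ℝ) (htk : 0 < tk) (hte : 0 < te) (hts : 0 < ts)
    (h1 : te / 2 < ts) (h2 : ts ≤ te) (h3 : 0 < tr) (h4 : 2 * tr < tk) :
    P3Feasible πhi tk te ts tr F πhi (1 - ts / te) ∧
    ∀ p q, P3Feasible πhi tk te ts tr F p q →
      Phi3 πhi tk te tr f F πhi (1 - ts / te) ≤ Phi3 πhi tk te tr f F p q := by
  have hte' : te ≠ 0 := ne_of_gt hte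
  have hFπ : F πhi = 1 := by rw [hF]; exact hone
  have hcont' : ContinuousOn (fun x => x * f x) (Set.Icc 0 πhi) :=
    continuousOn_id.mul hcont
  have hfint : ∀ a b : ℝ, 0 ≤ a → a ≤ b → b ≤ πhi →
      IntervalIntegrable f MeasureTheory.volume a b := by
    intro a b ha hab hb
    apply ContinuousOn.intervalIntegrable
    rw [Set.uIcc_of_le hab]
    exact hcont.mono (Set.Icc_subset_Icc ha hb)
  have hxfint : ∀ a b : ℝ, 0 ≤ a → a ≤ b → b ≤ πhi →
      IntervalIntegrable (fun x => x * f x) MeasureTheory.volume a b := by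
    intro a b ha hab hb
    apply ContinuousOn.intervalIntegrable
    rw [Set.uIcc_of_le hab]
    exact hcont'.mono (Set.Icc_subset_Icc ha hb)
  -- tail of F
  have hFtail : ∀ p : ℝ, 0 ≤ p → p ≤ πhi → (∫ x in p..πhi, f x) = 1 - F p := by
    intro p hp0 hp1
    have hsplit := intervalIntegral.integral_add_adjacent_intervals
      (hfint 0 p le_rfl hp0 hp1) (hfint p πhi hp0 hp1 le_rfl)
    rw [hone] at hsplit
    rw [hF]; linarith
  have hFle1 : ∀ p : ℝ, 0 ≤ p → p ≤ πhi → F p ≤ 1 := by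
    intro p hp0 hp1
    have htail : 0 ≤ ∫ x in p..πhi, f x := by
      apply intervalIntegral.integral_nonneg hp1
      intro x hx
      exact hnn x ⟨le_trans hp0 hx.1, hx.2⟩
    rw [hFtail p hp0 hp1] at htail
    linarith
  have hA0 : ∀ p : ℝ, 0 ≤ p → p ≤ πhi → 0 ≤ ∫ x in (0:ℝ)..p, x * f x := by
    intro p hp0 hp1
    apply intervalIntegral.integral_nonneg hp0
    intro x hx
    exact mul_nonneg hx.1 (hnn x ⟨hx.1, le_trans hx.2 hp1⟩)
  have hAtail : ∀ p : ℝ, 0 ≤ p → p ≤ πhi →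
      (∫ x in (0:ℝ)..πhi, x * f x) - (∫ x in (0:ℝ)..p, x * f x) ≤ πhi * (1 - F p) := by
    intro p hp0 hp1
    have hsplit := intervalIntegral.integral_add_adjacent_intervals
      (hxfint 0 p le_rfl hp0 hp1) (hxfint p πhi hp0 hp1 le_rfl)
    have hmono : (∫ x in p..πhi, x * f x) ≤ ∫ x in p..πhi, πhi * f x := by
      apply intervalIntegral.integral_mono_on hp1 (hxfint p πhi hp0 hp1 le_rfl)
        ((hfint p πhi hp0 hp1 le_rfl).const_mul πhi)
      intro x hx
      exact mul_le_mul_of_nonneg_right hx.2 (hnn x ⟨le_trans hp0 hx.1, hx.2⟩)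
    rw [intervalIntegral.integral_const_mul, hFtail p hp0 hp1] at hmono
    linarith
  have hAπ : (∫ x in (0:ℝ)..πhi, x * f x) ≤ πhi := by
    have := hAtail 0 le_rfl hπhi.le
    have hF0 : F 0 = 0 := by rw [hF]; simp
    rw [intervalIntegral.integral_same, hF0] at this
    linarith
  have hΦstar : Phi3 πhi tk te tr f F πhi (1 - ts / te)
      = (te - ts) * πhi + ts * (∫ x in (0:ℝ)..πhi, x * f x) := by
    unfold Phi3
    rw [hFπ]
    simp only [sub_self, mul_zero, sub_zero, div_one, sub_sub_cancel]
    field_simp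
  constructor
  · refine ⟨hπhi.le, le_rfl, ?_, ?_, ?_, ?_, ?_, ?_⟩
    · have : ts / te ≤ 1 := (div_le_one hte).2 h2
      linarith
    · have : 0 ≤ ts / te := div_nonneg hts.le hte.le
      linarith
    · have : (1 - ts / te) * te = te - ts := by
        field_simp
      rw [this]; linarith
    · rw [hFπ]; norm_num
    · rw [hFπ]; norm_num; linarith
    · rw [hFπ]
      have : (1 - (1 - ts / te)) * te = ts := by field_simp; ring
      rw [this]; norm_num
  · intro p q hfe
    obtain ⟨hp0, hp1, hq0, hq1, hqts, hFp, htr2, hcon⟩ := hfe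
    have hFp1 : F p ≤ 1 := hFle1 p hp0 hp1
    have hDlt : (tr / tk) * (1 - F p) < 1 / 2 := by
      rw [div_mul_eq_mul_div, div_lt_iff₀ htk]
      linarith
    have hD : 0 < 1 - (tr / tk) * (1 - F p) := by linarith
    have hD1 : 1 - (tr / tk) * (1 - F p) ≤ 1 := by
      have : 0 ≤ (tr / tk) * (1 - F p) :=
        mul_nonneg (div_nonneg h3.le htk.le) (by linarith)
      linarith
    rw [hΦstar]
    exact stmt_15_aux πhi (F p) (1 - (tr / tk) * (1 - F p))
      (∫ x in (0:ℝ)..p, x * f x) (∫ x in (0:ℝ)..πhi, x * f x) te ts q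
      hπhi hts hq1 hte hFp hD hD1 hFp1 (hA0 p hp0 hp1) (hAtail p hp0 hp1) hAπ hcon
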